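/- arXiv:2112.06715 — 4 statements merged into one kernel-verified Lean document; each statement's English description precedes it below -/
import Mathlib

section
/- Let H : ℝ → M_n(ℂ) be continuous with evolution operator U(t) solving U' = −iHU, U(0)=I. If a unitary q with q² = I satisfies q H(t)† q⁻¹ = H(t) for all t, then (U(t)†)⁻¹ = q⁻¹ U(t) q for all t ≥ 0. -/
/-!
The adjoint of `U` solves `(Uᴴ)' = i Uᴴ Hᴴ`, so `Uᴴ q U` has derivative `i Uᴴ (Hᴴ q - q H) U`,
which vanishes because the Q symmetry with `q⁻¹ = q` reads `Hᴴ q = q H`.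
Hence `Uᴴ q U = q` for all times, i.e. `Uᴴ (q U q) = 1`.
-/

open Matrix

namespace Matrix

variable {l m n : Type*} {𝔸 : Type*} [NormedRing 𝔸] [NormedAlgebra ℝ 𝔸]

/-- Matrices carry no global norm, so derivatives of matrix-valued functions are taken
entry by entry. -/
def HasEntrywiseDerivAt (A : ℝ → Matrix m n 𝔸) (A' : Matrix m n 𝔸) (t : ℝ) : Prop :=
  ∀ i j, HasDerivAt (fun s => A s i j) (A' i j) t

namespace HasEntrywiseDerivAt

theorem const (A : Matrix m n 𝔸) (t : ℝ) : HasEntrywiseDerivAt (fun _ => A) 0 t :=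
  fun i j => hasDerivAt_const t (A i j)

theorem mul [Fintype m] {A : ℝ → Matrix l m 𝔸} {B : ℝ → Matrix m n 𝔸}
    {A' : Matrix l m 𝔸} {B' : Matrix m n 𝔸} {t : ℝ}
    (hA : HasEntrywiseDerivAt A A' t) (hB : HasEntrywiseDerivAt B B' t) :
    HasEntrywiseDerivAt (fun s => A s * B s) (A' * B t + A t * B') t := by
  intro i j
  simp only [mul_apply, add_apply, ← Finset.sum_add_distrib]
  exact HasDerivAt.fun_sum fun k _ => (hA i k).fun_mul (hB k j)

theorem conjTranspose [StarRing 𝔸] [StarModule ℝ 𝔸] [ContinuousStar 𝔸]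
    {A : ℝ → Matrix m n 𝔸} {A' : Matrix m n 𝔸} {t : ℝ}
    (hA : HasEntrywiseDerivAt A A' t) : HasEntrywiseDerivAt (fun s => (A s)ᴴ) A'ᴴ t :=
  fun i j => (hA j i).star

theorem eq_of_forall_zero {A : ℝ → Matrix m n 𝔸} (hA : ∀ t, HasEntrywiseDerivAt A 0 t)
    (t t₀ : ℝ) : A t = A t₀ := by
  ext i j
  exact is_const_of_deriv_eq_zero (fun s => (hA s i j).differentiableAt)
    (fun s => (hA s i j).deriv) t t₀

end HasEntrywiseDerivAt

theorem conjTranspose_mul_mul_eq_of_pseudoHermitian [Fintype n]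
    {H U : ℝ → Matrix n n ℂ} (η : Matrix n n ℂ)
    (hU : ∀ t, HasEntrywiseDerivAt U ((-Complex.I) • (H t * U t)) t)
    (hH : ∀ t, (H t)ᴴ * η = η * H t) (t t₀ : ℝ) :
    (U t)ᴴ * η * U t = (U t₀)ᴴ * η * U t₀ := by
  refine HasEntrywiseDerivAt.eq_of_forall_zero (A := fun s => (U s)ᴴ * η * U s)
    (fun s => ?_) t t₀
  have hUη := ((hU s).conjTranspose.mul (HasEntrywiseDerivAt.const η s)).mul (hU s)
  convert hUη using 1
  simp only [conjTranspose_smul, conjTranspose_mul, star_neg, Complex.star_def, Complex.conj_I,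
    neg_neg, mul_zero, add_zero, Matrix.smul_mul, Matrix.mul_smul, mul_assoc, hH]
  rw [neg_smul, add_neg_cancel]

end Matrix

theorem evolution_Q_symmetry_general (n : ℕ) (H U : ℝ → Matrix (Fin n) (Fin n) ℂ)
    (hODE : ∀ t : ℝ, ∀ i j : Fin n,
      HasDerivAt (fun s => U s i j) (((-Complex.I) • (H t * U t)) i j) t)
    (hU0 : U 0 = 1)
    (q : Matrix (Fin n) (Fin n) ℂ)
    (hq_inv : q * q = 1)
    (hQ : ∀ t : ℝ, q * (H t)ᴴ * q⁻¹ = H t) :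
    ∀ t : ℝ, 0 ≤ t → ((U t)ᴴ)⁻¹ = q⁻¹ * U t * q := by
  intro t _
  have hq_inv_eq : q⁻¹ = q := inv_eq_right_inv hq_inv
  have hH : ∀ s, (H s)ᴴ * q = q * H s := fun s => calc
    (H s)ᴴ * q = q * (q * (H s)ᴴ * q⁻¹) := by
      rw [hq_inv_eq, ← mul_assoc, ← mul_assoc, hq_inv, one_mul]
    _ = q * H s := by rw [hQ s]
  have hconserved : (U t)ᴴ * q * U t = q := by
    rw [conjTranspose_mul_mul_eq_of_pseudoHermitian q hODE hH t 0, hU0]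
    simp
  rw [hq_inv_eq]
  refine inv_eq_right_inv ?_
  rw [← mul_assoc, ← mul_assoc, hconserved, hq_inv]

/-- If the time-evolution operator `U` solves `U'(t) = -i H(t) U(t)`, `U(0) = 1`,
and a unitary involution `q` satisfies the Q symmetry (`ε_q = 1`)
`q H(t)† q⁻¹ = H(t)` for all `t`, then `(U(t)†)⁻¹ = q⁻¹ U(t) q` for `t ≥ 0`. -/
theorem evolution_Q_symmetry (n : ℕ) (H U : ℝ → Matrix (Fin n) (Fin n) ℂ)
    (hHcont : Continuous H)
    (hODE : ∀ t : ℝ, ∀ i j : Fin n,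
      HasDerivAt (fun s => U s i j) (((-Complex.I) • (H t * U t)) i j) t)
    (hU0 : U 0 = 1)
    (q : Matrix (Fin n) (Fin n) ℂ)
    (hq_unitary : qᴴ * q = 1) (hq_inv : q * q = 1)
    (hQ : ∀ t : ℝ, q * (H t)ᴴ * q⁻¹ = H t) :
    ∀ t : ℝ, 0 ≤ t → ((U t)ᴴ)⁻¹ = q⁻¹ * U t * q :=
  evolution_Q_symmetry_general n H U hODE hU0 q hq_inv hQ
end

section
/- With notation as in the operator-composition construction: if H₁ and H₂ are τ-periodic and both satisfy the K symmetry with ε_k = 1, namely Hⱼ(k,t) = k̂ Hⱼ(−k,−t)* k̂⁻¹ for a fixed unitary k̂, then the composed Hamiltonian H(k,t) (given by H₂(k,2t) on [0,τ/4], H₁(k,2t−τ/2) on (τ/4,3τ/4), H₂(k,2t−τ) on [3τ/4,τ], extended periodically) also satisfies H(k,t) = k̂ H(−k,−t)* k̂⁻¹. -/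
/-!
Time reversal `t ↦ -t` is, up to the period, the reflection `t ↦ τ - t` of `[0, τ]`. This
reflection exchanges the two outer `H₂`-pieces of the composition and maps the middle `H₁`-piece
onto itself, and on each piece it intertwines the reparametrisation `t ↦ 2t - c` with time
reversal of the constituent up to a shift by `τ`. The K symmetry of `H₁` and `H₂` is thus
transported to `H` on one period, and periodicity extends it to all `t`.
-/

open Matrix Function Set

section TimeReversal

variable {M : Type*} {τ : ℝ}

theorem Function.Periodic.apply_neg_eq_of_apply_sub {F G : ℝ → M} (hF : Periodic F τ)
    (hG : Periodic G τ) {u s : ℝ} (h : F (τ - u) = G (τ - s)) : F (-u) = G (-s) := by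
  rw [← hF, ← hG, neg_add_eq_sub, neg_add_eq_sub, h]

theorem forall_apply_eq_apply_neg_of_forall_Ico {X : Type*} [Neg X] {H : X → ℝ → M}
    (hτ : 0 < τ) (hper : ∀ k, Periodic (H k) τ) (Φ : M → M)
    (h : ∀ k, ∀ t ∈ Ico 0 τ, H k t = Φ (H (-k) (-t))) (k : X) (t : ℝ) :
    H k t = Φ (H (-k) (-t)) := by
  have hpair : Periodic (fun t => (H k t, H (-k) (-t))) τ := fun t =>
    Prod.ext (hper k t) (by simpa only [neg_add'] using (hper (-k)).sub_eq (-t))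
  obtain ⟨s, hs, hts⟩ := hpair.exists_mem_Ico₀ hτ t
  obtain ⟨hts₁, hts₂⟩ := Prod.mk.inj hts
  rw [hts₁, hts₂]
  exact h k s hs

end TimeReversal

theorem composition_preserves_K_symmetry_general (n d : ℕ) (τ : ℝ) (hτ : 0 < τ)
    (H₁ H₂ H : (Fin d → ℝ) → ℝ → Matrix (Fin n) (Fin n) ℂ)
    (hper₁ : ∀ k, Function.Periodic (H₁ k) τ) (hper₂ : ∀ k, Function.Periodic (H₂ k) τ)
    (hperH : ∀ k, Function.Periodic (H k) τ)
    (hcomp₁ : ∀ k, ∀ t : ℝ, 0 ≤ t → t ≤ τ / 4 → H k t = H₂ k (2 * t))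
    (hcomp₂ : ∀ k, ∀ t : ℝ, τ / 4 < t → t < 3 * τ / 4 → H k t = H₁ k (2 * t - τ / 2))
    (hcomp₃ : ∀ k, ∀ t : ℝ, 3 * τ / 4 ≤ t → t ≤ τ → H k t = H₂ k (2 * t - τ))
    (khat : Matrix (Fin n) (Fin n) ℂ)
    (hK₁ : ∀ k t, H₁ k t = khat * (H₁ (-k) (-t)).map (starRingEnd ℂ) * khat⁻¹)
    (hK₂ : ∀ k t, H₂ k t = khat * (H₂ (-k) (-t)).map (starRingEnd ℂ) * khat⁻¹) :
    ∀ k t, H k t = khat * (H (-k) (-t)).map (starRingEnd ℂ) * khat⁻¹ := by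
  refine forall_apply_eq_apply_neg_of_forall_Ico hτ hperH (fun A => khat * A.map (starRingEnd ℂ) * khat⁻¹) fun k t ⟨ht₀, htτ⟩ => ?_
  rcases le_or_gt t (τ / 4) with h₁ | h₁
  · have hrev : H (-k) (-t) = H₂ (-k) (-(2 * t)) :=
      (hperH (-k)).apply_neg_eq_of_apply_sub (hper₂ (-k)) <| by
        rw [hcomp₃ (-k) (τ - t) (by linarith) (by linarith)]; ring_nf
    rw [hcomp₁ k t ht₀ h₁, hrev]
    exact hK₂ k _
  rcases lt_or_ge t (3 * τ / 4) with h₂ | h₂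
  · have hrev : H (-k) (-t) = H₁ (-k) (-(2 * t - τ / 2)) :=
      (hperH (-k)).apply_neg_eq_of_apply_sub (hper₁ (-k)) <| by
        rw [hcomp₂ (-k) (τ - t) (by linarith) (by linarith)]; ring_nf
    rw [hcomp₂ k t h₁ h₂, hrev]
    exact hK₁ k _
  · have hrev : H (-k) (-t) = H₂ (-k) (-(2 * t - τ)) :=
      (hperH (-k)).apply_neg_eq_of_apply_sub (hper₂ (-k)) <| by
        rw [hcomp₁ (-k) (τ - t) (by linarith) (by linarith)]; ring_nf
    rw [hcomp₃ k t h₂ htτ.le, hrev]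
    exact hK₂ k _

/-- Lemma 1, K-symmetry case (`ε_k = 1`): if the τ-periodic Hamiltonians
`H₁(k,t), H₂(k,t)` both satisfy `Hⱼ(k,t) = k̂ Hⱼ(-k,-t)* k̂⁻¹` (entrywise complex
conjugation) for a fixed unitary `k̂`, then so does the composed Hamiltonian. -/
theorem composition_preserves_K_symmetry (n d : ℕ) (τ : ℝ) (hτ : 0 < τ)
    (H₁ H₂ H : (Fin d → ℝ) → ℝ → Matrix (Fin n) (Fin n) ℂ)
    (hper₁ : ∀ k, Function.Periodic (H₁ k) τ) (hper₂ : ∀ k, Function.Periodic (H₂ k) τ)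
    (hperH : ∀ k, Function.Periodic (H k) τ)
    (hcomp₁ : ∀ k, ∀ t : ℝ, 0 ≤ t → t ≤ τ / 4 → H k t = H₂ k (2 * t))
    (hcomp₂ : ∀ k, ∀ t : ℝ, τ / 4 < t → t < 3 * τ / 4 → H k t = H₁ k (2 * t - τ / 2))
    (hcomp₃ : ∀ k, ∀ t : ℝ, 3 * τ / 4 ≤ t → t ≤ τ → H k t = H₂ k (2 * t - τ))
    (khat : Matrix (Fin n) (Fin n) ℂ)
    (hk_unitary : khatᴴ * khat = 1)
    (hk_invol : khat * khat.map (starRingEnd ℂ) = 1 ∨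
      khat * khat.map (starRingEnd ℂ) = -1)
    (hK₁ : ∀ k t, H₁ k t = khat * (H₁ (-k) (-t)).map (starRingEnd ℂ) * khat⁻¹)
    (hK₂ : ∀ k t, H₂ k t = khat * (H₂ (-k) (-t)).map (starRingEnd ℂ) * khat⁻¹) :
    ∀ k t, H k t = khat * (H (-k) (-t)).map (starRingEnd ℂ) * khat⁻¹ :=
  composition_preserves_K_symmetry_general n d τ hτ H₁ H₂ H hper₁ hper₂ hperH hcomp₁ hcomp₂ hcomp₃
    khat hK₁ hK₂
end

section
/- If q is a unitary involution with (U†)⁻¹ = q⁻¹Uq for a diagonalizable invertible matrix U with spectrum off the ray at angle −θ, then the Floquet Hamiltonian satisfies q⁻¹ H_{F,θ} q = H_{F,θ}†, i.e. H_{F,θ} is pseudo-Hermitian with respect to q. -/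
open Matrix Real

lemma exp_inj_strip {θ : ℝ} {x y : ℂ}
    (hx : x.im ∈ Set.Ioo (-θ) (-θ + 2 * π))
    (hy : y.im ∈ Set.Ioo (-θ) (-θ + 2 * π))
    (h : Complex.exp x = Complex.exp y) : x = y := by
  obtain ⟨k, hk⟩ := Complex.exp_eq_exp_iff_exists_int.mp h
  have him : x.im = y.im + k * (2 * π) := by
    rw [hk]; simp [Complex.add_im, Complex.mul_im]
  have hπ : (0:ℝ) < π := Real.pi_pos
  have hk0 : k = 0 := by
    rcases hx with ⟨hx1, hx2⟩
    rcases hy with ⟨hy1, hy2⟩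
    have h1 : (k : ℝ) * (2 * π) < 2 * π := by nlinarith
    have h2 : -(2*π) < (k : ℝ) * (2 * π) := by nlinarith
    have hlt : (k:ℝ) < 1 := by nlinarith
    have hgt : (-1:ℝ) < (k:ℝ) := by nlinarith
    have hlt' : k < 1 := by exact_mod_cast hlt
    have hgt' : -1 < k := by exact_mod_cast hgt
    omega
  rw [hk, hk0]; simp

lemma key_unique {n : ℕ} {θ : ℝ} (M : Matrix (Fin n) (Fin n) ℂ)
    (R Q : Fin n → Matrix (Fin n) (Fin n) ℂ) (a b : Fin n → ℂ)
    (hRM : ∀ i, R i * M = Complex.exp (a i) • R i)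
    (hMQ : ∀ j, M * Q j = Complex.exp (b j) • Q j)
    (hR1 : ∑ i, R i = 1) (hQ1 : ∑ j, Q j = 1)
    (ha : ∀ i, (a i).im ∈ Set.Ioo (-θ) (-θ + 2 * π))
    (hb : ∀ j, (b j).im ∈ Set.Ioo (-θ) (-θ + 2 * π)) :
    ∑ i, a i • R i = ∑ j, b j • Q j := by
  have hij : ∀ i j, a i • (R i * Q j) = b j • (R i * Q j) := by
    intro i j
    have h1 : Complex.exp (a i) • (R i * Q j) = Complex.exp (b j) • (R i * Q j) := by
      calc Complex.exp (a i) • (R i * Q j) = (Complex.exp (a i) • R i) * Q j := by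
            rw [Matrix.smul_mul]
        _ = (R i * M) * Q j := by rw [hRM]
        _ = R i * (M * Q j) := by rw [mul_assoc]
        _ = R i * (Complex.exp (b j) • Q j) := by rw [hMQ]
        _ = Complex.exp (b j) • (R i * Q j) := by rw [Matrix.mul_smul]
    by_cases h0 : R i * Q j = 0
    · simp [h0]
    · have : Complex.exp (a i) = Complex.exp (b j) := by
        have := sub_eq_zero.mpr h1
        rw [← sub_smul] at this
        rcases smul_eq_zero.mp this with h | h
        · exact sub_eq_zero.mp h
        · exact absurd h h0
      rw [exp_inj_strip (ha i) (hb j) this]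
  calc ∑ i, a i • R i = ∑ i, a i • (R i * ∑ j, Q j) := by rw [hQ1]; simp
    _ = ∑ i, ∑ j, a i • (R i * Q j) := by
        simp [Finset.mul_sum, Finset.smul_sum]
    _ = ∑ i, ∑ j, b j • (R i * Q j) := by
        exact Finset.sum_congr rfl fun i _ => Finset.sum_congr rfl fun j _ => hij i j
    _ = ∑ j, b j • ((∑ i, R i) * Q j) := by
        rw [Finset.sum_comm]
        simp [Finset.sum_mul, Finset.smul_sum]
    _ = ∑ j, b j • Q j := by rw [hR1]; simp

/-- Q-symmetry (pseudo-Hermiticity) of the Floquet Hamiltonian: if a unitary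
involution `q` satisfies `(U†)⁻¹ = q⁻¹ U q` for a diagonalizable invertible `U`
with eigenvalues off the ray at angle `-θ`, then `H_{F,θ} := (i/τ) ln_{-θ}(U)`
satisfies `q⁻¹ H_{F,θ} q = H_{F,θ}†`. -/
theorem floquet_hamiltonian_pseudo_hermitian (n : ℕ) (τ θ : ℝ) (hτ : 0 < τ)
    (U q : Matrix (Fin n) (Fin n) ℂ)
    (hq_unitary : qᴴ * q = 1) (hq_inv : q * q = 1)
    (hsym : (Uᴴ)⁻¹ = q⁻¹ * U * q)
    (hinv : IsUnit U)
    (ξ : Fin n → ℂ) (ψR ψL : Fin n → (Fin n → ℂ))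
    (hbiortho : ∀ i j : Fin n, star (ψL i) ⬝ᵥ ψR j = if i = j then 1 else 0)
    (hcomplete : ∑ i : Fin n, Matrix.vecMulVec (ψR i) (star (ψL i)) = 1)
    (hU : U = ∑ i : Fin n, ξ i • Matrix.vecMulVec (ψR i) (star (ψL i)))
    (w : Fin n → ℂ)
    (hw : ∀ i, Complex.exp (w i) = ξ i)
    (hwIm : ∀ i, (w i).im ∈ Set.Ioo (-θ) (-θ + 2 * π)) :
    q⁻¹ * ((Complex.I / (τ : ℂ)) •
        ∑ i : Fin n, w i • Matrix.vecMulVec (ψR i) (star (ψL i))) * q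
      = ((Complex.I / (τ : ℂ)) •
          ∑ i : Fin n, w i • Matrix.vecMulVec (ψR i) (star (ψL i)))ᴴ := by
  set P : Fin n → Matrix (Fin n) (Fin n) ℂ :=
    fun i => Matrix.vecMulVec (ψR i) (star (ψL i)) with hP
  have hqq : q⁻¹ = q := Matrix.inv_eq_left_inv hq_inv
  -- products of projections
  have hPP : ∀ i j, P i * P j = if i = j then P i else 0 := by
    intro i j
    have hb := hbiortho i j
    rw [dotProduct] at hb
    simp only [Pi.star_apply] at hb
    ext k l
    rw [Matrix.mul_apply]
    simp only [hP, Matrix.vecMulVec_apply, Pi.star_apply]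
    have : ∑ m, ψR i k * star (ψL i m) * (ψR j m * star (ψL j l))
        = (∑ m, star (ψL i m) * ψR j m) * (ψR i k * star (ψL j l)) := by
      rw [Finset.sum_mul]
      exact Finset.sum_congr rfl fun m _ => by ring
    rw [this, hb]
    by_cases h : i = j
    · simp [h, Matrix.vecMulVec_apply, Complex.star_def]
    · simp [h]
  have hPU : ∀ i, P i * U = ξ i • P i := by
    intro i
    rw [hU, Finset.mul_sum]
    have : ∀ j ∈ Finset.univ, P i * ξ j • P j = ξ j • (if i = j then P i else 0) := by
      intro j _
      rw [Matrix.mul_smul, hPP]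
    rw [Finset.sum_congr rfl this]
    simp
  -- the transformed projections
  set R : Fin n → Matrix (Fin n) (Fin n) ℂ := fun i => q * P i * q with hR
  set Q : Fin n → Matrix (Fin n) (Fin n) ℂ := fun i => (P i)ᴴ with hQ
  set M : Matrix (Fin n) (Fin n) ℂ := q * U * q with hM
  have hMsym : M = (Uᴴ)⁻¹ := by rw [hsym, hqq]
  have hRM : ∀ i, R i * M = Complex.exp (w i) • R i := by
    intro i
    have h1 : R i * M = q * (P i * U) * q := by
      show q * P i * q * (q * U * q) = q * (P i * U) * q
      calc q * P i * q * (q * U * q) = q * (P i * ((q * q) * (U * q))) := by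
            noncomm_ring
        _ = q * (P i * U) * q := by
            rw [hq_inv, one_mul, ← mul_assoc (P i) U q, ← mul_assoc]
    rw [h1, hPU, Matrix.mul_smul, Matrix.smul_mul, hw i]
  have hξ : ∀ j, ξ j ≠ 0 := fun j => by rw [← hw j]; exact Complex.exp_ne_zero _
  have hUdet : IsUnit (Uᴴ).det := by
    rw [Matrix.det_conjTranspose]
    exact ((Matrix.isUnit_iff_isUnit_det U).mp hinv).star
  have hUHQ : ∀ j, Uᴴ * Q j = (starRingEnd ℂ) (ξ j) • Q j := by
    intro j
    have := congrArg Matrix.conjTranspose (hPU j)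
    rwa [Matrix.conjTranspose_mul, Matrix.conjTranspose_smul] at this
  have hMQ : ∀ j, M * Q j = Complex.exp (-(starRingEnd ℂ) (w j)) • Q j := by
    intro j
    have hQj : Q j = (starRingEnd ℂ) (ξ j) • (M * Q j) := by
      calc Q j = ((Uᴴ)⁻¹ * Uᴴ) * Q j := by
            rw [Matrix.nonsing_inv_mul _ hUdet, one_mul]
        _ = (Uᴴ)⁻¹ * (Uᴴ * Q j) := by rw [mul_assoc]
        _ = (starRingEnd ℂ) (ξ j) • ((Uᴴ)⁻¹ * Q j) := by
            rw [hUHQ, Matrix.mul_smul]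
        _ = (starRingEnd ℂ) (ξ j) • (M * Q j) := by rw [hMsym]
    have hξc : (starRingEnd ℂ) (ξ j) ≠ 0 := by
      simpa using hξ j
    have hexp : Complex.exp (-(starRingEnd ℂ) (w j)) = ((starRingEnd ℂ) (ξ j))⁻¹ := by
      rw [Complex.exp_neg, Complex.exp_conj, hw j]
    rw [hexp]
    rw [hQj]
    rw [smul_smul, inv_mul_cancel₀ hξc, one_smul]
    rw [← hQj]
  have hR1 : ∑ i, R i = 1 := by
    rw [hR]
    have : ∑ i, q * P i * q = q * (∑ i, P i) * q := by
      rw [Finset.mul_sum, Finset.sum_mul]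
    rw [this, hcomplete, mul_one, hq_inv]
  have hQ1 : ∑ j, Q j = 1 := by
    rw [hQ, ← Matrix.conjTranspose_sum, hcomplete, Matrix.conjTranspose_one]
  have hbIm : ∀ j, (-(starRingEnd ℂ) (w j)).im ∈ Set.Ioo (-θ) (-θ + 2 * π) := by
    intro j
    simpa using hwIm j
  have hkey := key_unique M R Q w (fun j => -(starRingEnd ℂ) (w j))
    hRM hMQ hR1 hQ1 hwIm hbIm
  -- assemble
  rw [hqq]
  have hL : q * ((Complex.I / (τ : ℂ)) • ∑ i, w i • P i) * q
      = (Complex.I / (τ : ℂ)) • ∑ i, w i • R i := by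
    rw [Matrix.mul_smul, Matrix.smul_mul]
    congr 1
    rw [Finset.mul_sum, Finset.sum_mul]
    exact Finset.sum_congr rfl fun i _ => by
      rw [Matrix.mul_smul, Matrix.smul_mul]
  rw [hL, hkey]
  rw [Matrix.conjTranspose_smul, Matrix.conjTranspose_sum]
  rw [Finset.smul_sum, Finset.smul_sum]
  refine Finset.sum_congr rfl fun j _ => ?_
  rw [Matrix.conjTranspose_smul, smul_smul, smul_smul]
  congr 1
  simp only [RCLike.star_def]
  rw [map_div₀, Complex.conj_I, Complex.conj_ofReal]
  ring
end

section
/- If p is a unitary involution with p⁻¹Up = U⁻¹ for a diagonalizable invertible matrix U whose spectrum lies off the ray at angle −θ and off the ray at angle θ, then p⁻¹ H_{F,θ} p = −(2π/τ)I − H_{F,−θ}, where H_{F,±θ} := (i/τ)ln_{∓θ}(U). -/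
open Matrix Real

lemma log_branch_unique (c : ℝ) (z z' : ℂ) (hz : Complex.exp z = Complex.exp z')
    (h1 : z.im ∈ Set.Ioo c (c + 2*π)) (h2 : z'.im ∈ Set.Ioo c (c + 2*π)) : z = z' := by
  obtain ⟨k, hk⟩ := Complex.exp_eq_exp_iff_exists_int.1 hz
  have him : z.im = z'.im + k * (2*π) := by
    rw [hk]; simp [Complex.add_im, Complex.mul_im]
  have hπ := Real.pi_pos
  have hk0 : (k:ℝ) = 0 := by
    obtain ⟨a1, b1⟩ := h1; obtain ⟨a2, b2⟩ := h2
    rcases lt_trichotomy (k:ℝ) 0 with h | h | h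
    · have : (k:ℝ) ≤ -1 := by exact_mod_cast Int.le_of_lt_add_one (by exact_mod_cast h)
      nlinarith
    · exact h
    · have : (1:ℝ) ≤ k := by exact_mod_cast h
      nlinarith
  have : (k:ℂ) = 0 := by exact_mod_cast hk0
  rw [hk, this]; ring

lemma vecMulVec_mul_vecMulVec' {n : ℕ} (a b c d : Fin n → ℂ) :
    vecMulVec a b * vecMulVec c d = (b ⬝ᵥ c) • vecMulVec a d := by
  ext i j
  simp [Matrix.mul_apply, vecMulVec_apply, dotProduct, Finset.sum_mul, Finset.mul_sum]
  congr 1; ext k; ring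

/-- P-symmetry of the Floquet Hamiltonian: if a unitary involution `p` satisfies
`p⁻¹ U p = U⁻¹` for a diagonalizable invertible `U` whose eigenvalues avoid the rays
at angles `θ` and `-θ`, then `p⁻¹ H_{F,θ} p = -(2π/τ) I - H_{F,-θ}`, where
`H_{F,θ} := (i/τ) ln_{-θ}(U)` and `H_{F,-θ} := (i/τ) ln_θ(U)`. -/
theorem floquet_hamiltonian_P_symmetry (n : ℕ) (τ θ : ℝ) (hτ : 0 < τ)
    (U p : Matrix (Fin n) (Fin n) ℂ)
    (hp_unitary : pᴴ * p = 1) (hp_inv : p * p = 1)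
    (hsym : p⁻¹ * U * p = U⁻¹)
    (hinv : IsUnit U)
    (ξ : Fin n → ℂ) (ψR ψL : Fin n → (Fin n → ℂ))
    (hbiortho : ∀ i j : Fin n, star (ψL i) ⬝ᵥ ψR j = if i = j then 1 else 0)
    (hcomplete : ∑ i : Fin n, Matrix.vecMulVec (ψR i) (star (ψL i)) = 1)
    (hU : U = ∑ i : Fin n, ξ i • Matrix.vecMulVec (ψR i) (star (ψL i)))
    -- branch logarithms: w for ln_{-θ} (Im ∈ (-θ, -θ+2π)), w' for ln_θ (Im ∈ (θ, θ+2π))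
    (w w' : Fin n → ℂ)
    (hw : ∀ i, Complex.exp (w i) = ξ i)
    (hwIm : ∀ i, (w i).im ∈ Set.Ioo (-θ) (-θ + 2 * π))
    (hw' : ∀ i, Complex.exp (w' i) = ξ i)
    (hw'Im : ∀ i, (w' i).im ∈ Set.Ioo θ (θ + 2 * π)) :
    p⁻¹ * ((Complex.I / (τ : ℂ)) •
        ∑ i : Fin n, w i • Matrix.vecMulVec (ψR i) (star (ψL i))) * p
      = -(((2 * π / τ : ℝ) : ℂ) • (1 : Matrix (Fin n) (Fin n) ℂ))
        - (Complex.I / (τ : ℂ)) •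
            ∑ i : Fin n, w' i • Matrix.vecMulVec (ψR i) (star (ψL i)) := by
  have hτ0 : (τ:ℂ) ≠ 0 := by exact_mod_cast hτ.ne'
  set P : Fin n → Matrix (Fin n) (Fin n) ℂ :=
    fun i => vecMulVec (ψR i) (star (ψL i)) with hPdef
  have hpinv : p⁻¹ = p := Matrix.inv_eq_left_inv hp_inv
  have hPP : ∀ i j, P i * P j = if i = j then P i else 0 := by
    intro i j
    rw [hPdef]; simp only
    rw [vecMulVec_mul_vecMulVec', hbiortho]
    by_cases h : i = j <;> simp [h]
  have hξ : ∀ i, ξ i ≠ 0 := fun i => (hw i) ▸ Complex.exp_ne_zero _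
  have hUP : ∀ j, U * P j = ξ j • P j := by
    intro j
    rw [hU, Finset.sum_mul]
    rw [Finset.sum_eq_single j]
    · rw [Matrix.smul_mul, hPP]; simp
    · intro i _ hij
      rw [Matrix.smul_mul, hPP]; simp [hij]
    · simp
  have hPU : ∀ i, P i * U = ξ i • P i := by
    intro i
    rw [hU, Finset.mul_sum]
    rw [Finset.sum_eq_single i]
    · rw [Matrix.mul_smul, hPP]; simp
    · intro j _ hij
      rw [Matrix.mul_smul, hPP]; simp [Ne.symm hij]
    · simp
  have hUd : IsUnit U.det := (Matrix.isUnit_iff_isUnit_det U).1 hinv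
  have hAP : ∀ j, U⁻¹ * P j = (ξ j)⁻¹ • P j := by
    intro j
    have h1 : U⁻¹ * (U * P j) = P j := by
      rw [← mul_assoc, Matrix.nonsing_inv_mul U hUd, one_mul]
    rw [hUP, Matrix.mul_smul] at h1
    have h2 := congrArg (fun M => (ξ j)⁻¹ • M) h1
    simpa [smul_smul, inv_mul_cancel₀ (hξ j)] using h2
  set Q : Fin n → Matrix (Fin n) (Fin n) ℂ := fun i => p * P i * p with hQdef
  have hUinv : U⁻¹ = p * U * p := by rw [← hsym, hpinv]
  have hQA : ∀ i, Q i * U⁻¹ = ξ i • Q i := by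
    intro i
    rw [hQdef]; simp only
    rw [hUinv]
    calc p * P i * p * (p * U * p) = p * (P i * (p * p) * U) * p := by
          simp only [mul_assoc]
      _ = p * (P i * U) * p := by rw [hp_inv, mul_one]
      _ = ξ i • (p * P i * p) := by rw [hPU, Matrix.mul_smul, Matrix.smul_mul]
  -- key pointwise identity
  have hπ := Real.pi_pos
  have key : ∀ i j, w i • (Q i * P j) = (2 * π * Complex.I - w' j) • (Q i * P j) := by
    intro i j
    by_cases h0 : Q i * P j = 0
    · rw [h0, smul_zero, smul_zero]
    · have h1 : ξ i • (Q i * P j) = (ξ j)⁻¹ • (Q i * P j) := by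
        calc ξ i • (Q i * P j) = (Q i * U⁻¹) * P j := by
              rw [hQA, Matrix.smul_mul]
          _ = Q i * (U⁻¹ * P j) := by rw [mul_assoc]
          _ = (ξ j)⁻¹ • (Q i * P j) := by rw [hAP, Matrix.mul_smul]
      have h2 : ξ i = (ξ j)⁻¹ := by
        by_contra hne
        have := sub_eq_zero.2 h1
        rw [← sub_smul] at this
        rcases smul_eq_zero.1 this with h | h
        · exact hne (sub_eq_zero.1 h)
        · exact h0 h
      have hexp : Complex.exp (w i) = Complex.exp (2 * π * Complex.I - w' j) := by
        rw [Complex.exp_sub, Complex.exp_two_pi_mul_I, hw, hw', h2, one_div]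
      have heq : w i = 2 * π * Complex.I - w' j := by
        refine log_branch_unique (-θ) _ _ hexp ?_ ?_
        · have := hwIm i
          constructor <;> [exact this.1; linarith [this.2]]
        · have him : (2 * π * Complex.I - w' j).im = 2 * π - (w' j).im := by
            simp [Complex.sub_im, Complex.mul_im]
          have := hw'Im j
          rw [him]
          constructor <;> [linarith [this.2]; linarith [this.1]]
      rw [heq]
  -- sum it up
  have hsumQ : ∑ i, Q i = 1 := by
    rw [hQdef]; simp only
    rw [← Finset.sum_mul, ← Finset.mul_sum]
    rw [show (∑ i, P i) = 1 from hcomplete]  -- hcomplete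
    rw [mul_one, hp_inv]
  have hmain : p * (∑ i, w i • P i) * p = (2 * π * Complex.I) • (1 : Matrix (Fin n) (Fin n) ℂ)
      - ∑ j, w' j • P j := by
    calc p * (∑ i, w i • P i) * p = ∑ i, w i • Q i := by
          rw [Finset.mul_sum, Finset.sum_mul]
          refine Finset.sum_congr rfl fun i _ => ?_
          rw [Matrix.mul_smul, Matrix.smul_mul]
      _ = ∑ i, ∑ j, w i • (Q i * P j) := by
          refine Finset.sum_congr rfl fun i _ => ?_
          rw [← Finset.smul_sum, ← Finset.mul_sum,
            show (∑ j, P j) = 1 from hcomplete, mul_one]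
      _ = ∑ j, ∑ i, (2 * π * Complex.I - w' j) • (Q i * P j) := by
          rw [Finset.sum_comm]
          exact Finset.sum_congr rfl fun j _ => Finset.sum_congr rfl fun i _ => key i j
      _ = ∑ j, (2 * π * Complex.I - w' j) • P j := by
          refine Finset.sum_congr rfl fun j _ => ?_
          rw [← Finset.smul_sum, ← Finset.sum_mul, hsumQ, one_mul]
      _ = (2 * π * Complex.I) • (1 : Matrix (Fin n) (Fin n) ℂ) - ∑ j, w' j • P j := by
          rw [← hcomplete, Finset.smul_sum, ← Finset.sum_sub_distrib]
          exact Finset.sum_congr rfl fun j _ => (sub_smul _ _ _)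
  rw [hpinv, Matrix.mul_smul, Matrix.smul_mul, hmain, smul_sub, smul_smul]
  congr 1
  have : Complex.I / τ * (2 * π * Complex.I) = -(((2 * π / τ : ℝ) : ℂ)) := by
    push_cast
    field_simp
    ring_nf
    rw [Complex.I_sq]
  rw [this, neg_smul]
end
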